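/- Fix real constants p, q, r, s. At every point P = (T,X,Y,Z) with ζ(T,Z) ≠ 0 and ξ(T,Z) ≠ 0, the forward map Φ is differentiable, and its Jacobian matrix J = DΦ(P) (with coordinates ordered (t,x,y,z) and (T,X,Y,Z)) satisfies Jᵀ G(Φ(P)) J = diag(1,−1,−1,−1), where G(t,x,y,z) = diag(1, −f(t,z)², −g(t,z)², −1). That is, Φ pulls the metric ds² = dt² − f²dx² − g²dy² − dz² back to the Minkowski metric ds² = dT² − dX² − dY² − dZ². -/

import Mathlib

/-!
Φ preserves T − Z, and ζ = p + q u, ξ = r + s u are affine in the null coordinate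
u = (T − Z)/√2. Writing a = (q/√2) X/ζ and b = (s/√2) Y/ξ, the differential of Φ is
ζ dx = dX − √2 a du, ξ dy = dY − √2 b du, and dt, dz are dT, dZ shifted by the same amount
−a dX − b dY + (a² + b²) du/√2. In dt² − dz² = √2 du (dt + dz) the shift produces exactly the
cross terms and the du² terms of ζ² dx² + ξ² dy², which therefore cancel; the pulled-back form is
dT² − dX² − dY² − dZ², and polarisation gives the Gram matrix Jᵀ G J.
-/

open Matrix

noncomputable section

/-- ζ(T,Z) = p + q(T−Z)/√2. -/
def zeta (p q T Z : ℝ) : ℝ := p + q * ((T - Z) / Real.sqrt 2)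

/-- ξ(T,Z) = r + s(T−Z)/√2. -/
def xi (r s T Z : ℝ) : ℝ := r + s * ((T - Z) / Real.sqrt 2)

/-- The forward map Φ from Fermi coordinates v = (T,X,Y,Z) (indices 0,1,2,3)
to wave coordinates (t,x,y,z) (indices 0,1,2,3), Eqs. (FT2)-(FT5). -/
def fwd (p q r s : ℝ) (v : Fin 4 → ℝ) : Fin 4 → ℝ :=
  ![v 0 - q * (v 1) ^ 2 / (2 * Real.sqrt 2 * zeta p q (v 0) (v 3))
        - s * (v 2) ^ 2 / (2 * Real.sqrt 2 * xi r s (v 0) (v 3)),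
    v 1 / zeta p q (v 0) (v 3),
    v 2 / xi r s (v 0) (v 3),
    v 3 - q * (v 1) ^ 2 / (2 * Real.sqrt 2 * zeta p q (v 0) (v 3))
        - s * (v 2) ^ 2 / (2 * Real.sqrt 2 * xi r s (v 0) (v 3))]

/-- The matrix G(t,x,y,z) = diag(1, −f(t,z)², −g(t,z)², −1) of the metric
ds² = dt² − f²dx² − g²dy² − dz², where f(t,z) = p + q(t−z)/√2 and
g(t,z) = r + s(t−z)/√2, in coordinates w = (t,x,y,z). -/
def Gmet (p q r s : ℝ) (w : Fin 4 → ℝ) : Matrix (Fin 4) (Fin 4) ℝ :=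
  Matrix.diagonal ![1, -(p + q * ((w 0 - w 3) / Real.sqrt 2)) ^ 2,
    -(r + s * ((w 0 - w 3) / Real.sqrt 2)) ^ 2, -1]


theorem Matrix.transpose_mul_diagonal_mul_eq_diagonal_of_forall {m n R : Type*} [Fintype m]
    [Fintype n] [DecidableEq m] [DecidableEq n] [CommSemiring R] (L : (n → R) → m → R)
    (g : m → R) (η : n → R) (hL : ∀ u v, ∑ k, g k * L u k * L v k = ∑ k, η k * u k * v k) :
    (of fun i j => L (Pi.single j 1) i)ᵀ * diagonal g * of (fun i j => L (Pi.single j 1) i) =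
      diagonal η := by
  ext i j
  calc _ = ∑ k, g k * L (Pi.single i 1) k * L (Pi.single j 1) k := by
        rw [mul_apply]
        simp only [mul_diagonal, transpose_apply, of_apply]
        exact Finset.sum_congr rfl fun k _ => by ring
    _ = diagonal η i j := by
        rw [hL]
        rcases eq_or_ne i j with rfl | hij
        · simp [Pi.single_apply]
        · simp [Pi.single_apply, hij, hij.symm]

lemma xi_eq_zeta : xi = zeta := rfl

lemma differentiableAt_fwd {p q r s : ℝ} {P : Fin 4 → ℝ}
    (hz : zeta p q (P 0) (P 3) ≠ 0) (hx : xi r s (P 0) (P 3) ≠ 0) :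
    DifferentiableAt ℝ (fwd p q r s) P := by
  rw [differentiableAt_pi]
  intro i
  fin_cases i <;>
    simp only [fwd, zeta, xi, Fin.isValue, Fin.zero_eta, Fin.mk_one, Fin.reduceFinMk, cons_val_zero,
      cons_val_one, cons_val] at * <;>
    fun_prop (disch := simp [*])

lemma zeta_add_mul (p q T Z t a b : ℝ) :
    zeta p q (T + t * a) (Z + t * b) = zeta p q T Z + t * (q / √2 * (a - b)) := by
  simp only [zeta]; ring

lemma hasDerivAt_div_zeta {p q T Z X a b c : ℝ} (hz : zeta p q T Z ≠ 0) :
    HasDerivAt (fun t => (X + t * c) / zeta p q (T + t * a) (Z + t * b))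
      ((c - q / √2 * X / zeta p q T Z * (a - b)) / zeta p q T Z) 0 := by
  simp only [zeta_add_mul]
  refine (((hasDerivAt_mul_const c).const_add X).div
    ((hasDerivAt_mul_const _).const_add _) (by simpa)).congr_deriv ?_
  simp only [zero_mul, add_zero]
  field_simp

lemma hasDerivAt_sq_div_zeta {p q T Z X a b c : ℝ} (hz : zeta p q T Z ≠ 0) :
    HasDerivAt (fun t => q * (X + t * c) ^ 2 / (2 * √2 * zeta p q (T + t * a) (Z + t * b)))
      (q / √2 * X / zeta p q T Z * c - (q / √2 * X / zeta p q T Z) ^ 2 / 2 * (a - b)) 0 := by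
  simp only [zeta_add_mul]
  refine (((((hasDerivAt_mul_const c).const_add X).pow 2).const_mul q).div
    (((hasDerivAt_mul_const _).const_add _).const_mul _) (by simpa)).congr_deriv ?_
  simp only [zero_mul, add_zero, Pi.pow_apply]
  field_simp
  ring

-- `a`, `b` as in the header; `w = h 0 - h 3` is `√2 du`.
def fwdDeriv (p q r s : ℝ) (P h : Fin 4 → ℝ) : Fin 4 → ℝ :=
  let ζ := zeta p q (P 0) (P 3)
  let ξ := xi r s (P 0) (P 3)
  let a := q / √2 * P 1 / ζ
  let b := s / √2 * P 2 / ξ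
  let w := h 0 - h 3
  ![h 0 - (a * h 1 - a ^ 2 / 2 * w) - (b * h 2 - b ^ 2 / 2 * w),
    (h 1 - a * w) / ζ,
    (h 2 - b * w) / ξ,
    h 3 - (a * h 1 - a ^ 2 / 2 * w) - (b * h 2 - b ^ 2 / 2 * w)]

lemma hasLineDerivAt_fwd {p q r s : ℝ} {P : Fin 4 → ℝ}
    (hz : zeta p q (P 0) (P 3) ≠ 0) (hx : xi r s (P 0) (P 3) ≠ 0) (h : Fin 4 → ℝ) :
    HasLineDerivAt ℝ (fwd p q r s) (fwdDeriv p q r s P h) P h := by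
  have hline : ∀ k, HasDerivAt (fun t : ℝ => P k + t * h k) (h k) 0 := fun k =>
    (hasDerivAt_mul_const (h k)).const_add (P k)
  have hx' : zeta r s (P 0) (P 3) ≠ 0 := hx
  rw [HasLineDerivAt, hasDerivAt_pi]
  intro i
  fin_cases i <;> simp only [fwd, fwdDeriv, xi_eq_zeta, Pi.add_apply, Pi.smul_apply, smul_eq_mul]
  · exact ((hline 0).sub (hasDerivAt_sq_div_zeta hz)).sub (hasDerivAt_sq_div_zeta hx')
  · exact hasDerivAt_div_zeta hz
  · exact hasDerivAt_div_zeta hx'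
  · exact ((hline 3).sub (hasDerivAt_sq_div_zeta hz)).sub (hasDerivAt_sq_div_zeta hx')

lemma fderiv_fwd_apply {p q r s : ℝ} {P : Fin 4 → ℝ}
    (hz : zeta p q (P 0) (P 3) ≠ 0) (hx : xi r s (P 0) (P 3) ≠ 0) (h : Fin 4 → ℝ) :
    fderiv ℝ (fwd p q r s) P h = fwdDeriv p q r s P h := by
  rw [← (differentiableAt_fwd hz hx).lineDeriv_eq_fderiv, (hasLineDerivAt_fwd hz hx h).lineDeriv]

lemma Gmet_fwd (p q r s : ℝ) (P : Fin 4 → ℝ) :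
    Gmet p q r s (fwd p q r s P) =
      diagonal ![1, -zeta p q (P 0) (P 3) ^ 2, -xi r s (P 0) (P 3) ^ 2, -1] := by
  have hu : fwd p q r s P 0 - fwd p q r s P 3 = P 0 - P 3 := by simp [fwd]
  rw [Gmet, hu, zeta, xi]

lemma fwdDeriv_pullback {p q r s : ℝ} {P : Fin 4 → ℝ}
    (hz : zeta p q (P 0) (P 3) ≠ 0) (hx : xi r s (P 0) (P 3) ≠ 0) (h h' : Fin 4 → ℝ) :
    ∑ k, ![1, -zeta p q (P 0) (P 3) ^ 2, -xi r s (P 0) (P 3) ^ 2, -1] k *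
        fwdDeriv p q r s P h k * fwdDeriv p q r s P h' k =
      ∑ k, ![1, -1, -1, -1] k * h k * h' k := by
  simp only [Fin.sum_univ_four, fwdDeriv, Fin.isValue, cons_val_zero, cons_val_one, cons_val,
    one_mul, neg_mul, neg_sub]
  field_simp
  ring

/-- At every point where ζ ≠ 0 and ξ ≠ 0, the map Φ is differentiable and its
Jacobian J satisfies Jᵀ G(Φ(P)) J = diag(1,−1,−1,−1): Φ pulls the wave metric
back to the Minkowski metric. -/
theorem fermi_map_pullback_minkowski (p q r s : ℝ) (P : Fin 4 → ℝ)
    (hz : zeta p q (P 0) (P 3) ≠ 0) (hx : xi r s (P 0) (P 3) ≠ 0) :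
    DifferentiableAt ℝ (fwd p q r s) P ∧
    (let J : Matrix (Fin 4) (Fin 4) ℝ :=
      Matrix.of fun i j => fderiv ℝ (fwd p q r s) P (Pi.single j 1) i
    Jᵀ * Gmet p q r s (fwd p q r s P) * J = Matrix.diagonal ![1, -1, -1, -1]) := by
  refine ⟨differentiableAt_fwd hz hx, ?_⟩
  rw [Gmet_fwd]
  apply transpose_mul_diagonal_mul_eq_diagonal_of_forall
  intro h h'
  simp only [fderiv_fwd_apply hz hx]
  exact fwdDeriv_pullback hz hx h h'
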